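/- Let H be a complex Hilbert space, let P, S ∈ Σ⁺(H), and let t ≥ 0. Then the operator (I + tPS)⁻¹P is self-adjoint and positive semi-definite, i.e. (I + tPS)⁻¹P ∈ Σ⁺(H). (Equivalently: the flow of the differential equation Ṗ = −PSP leaves the cone Σ⁺(H) invariant.) -/

import Mathlib

/-!
Write `P = R²` with `R = √P ≥ 0`. The push-through identity `(1 + xy)⁻¹x = x(1 + yx)⁻¹`, applied
with `x = R` and `y = tRS`, moves the problem to `1 + tRSR`, which is `1` plus a positive operator,
hence invertible with positive inverse. Then `(1 + tPS)⁻¹P = R(1 + tRSR)⁻¹R` is a conjugate of a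
positive operator by a self-adjoint one.
-/

open CFC

section PushThrough

variable {M : Type*} [Ring M] {a b : M}

theorem IsUnit.one_add_mul_swap (h : IsUnit (1 + b * a)) : IsUnit (1 + a * b) := by
  set u := Ring.inverse (1 + b * a)
  have hu₁ : (1 + b * a) * u = 1 := Ring.mul_inverse_cancel _ h
  have hu₂ : u * (1 + b * a) = 1 := Ring.inverse_mul_cancel _ h
  refine ⟨⟨1 + a * b, 1 - a * u * b, ?_, ?_⟩, rfl⟩
  · calc (1 + a * b) * (1 - a * u * b) = 1 + a * b - a * ((1 + b * a) * u) * b := by noncomm_ring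
      _ = 1 := by rw [hu₁]; noncomm_ring
  · calc (1 - a * u * b) * (1 + a * b) = 1 + a * b - a * (u * (1 + b * a)) * b := by noncomm_ring
      _ = 1 := by rw [hu₂]; noncomm_ring

theorem Ring.inverse_one_add_mul_mul (h : IsUnit (1 + b * a)) :
    Ring.inverse (1 + a * b) * a = a * Ring.inverse (1 + b * a) := by
  have hab : (1 + a * b) * (a * Ring.inverse (1 + b * a)) = a := by
    calc (1 + a * b) * (a * Ring.inverse (1 + b * a))
        = a * ((1 + b * a) * Ring.inverse (1 + b * a)) := by noncomm_ring
      _ = a := by rw [Ring.mul_inverse_cancel _ h, mul_one]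
  calc Ring.inverse (1 + a * b) * a
      = Ring.inverse (1 + a * b) * ((1 + a * b) * (a * Ring.inverse (1 + b * a))) := by rw [hab]
    _ = a * Ring.inverse (1 + b * a) := Ring.inverse_mul_cancel_left _ _ h.one_add_mul_swap

end PushThrough

section CStarAlgebra

variable {A : Type*} [CStarAlgebra A] [PartialOrder A] [StarOrderedRing A] {a b : A}

theorem isStrictlyPositive_one_add_sqrt_mul_mul_sqrt (hb : 0 ≤ b) :
    IsStrictlyPositive (1 + sqrt a * b * sqrt a) :=
  isStrictlyPositive_one.add_nonneg (conjugate_nonneg_of_nonneg hb (sqrt_nonneg a))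

theorem one_add_mul_eq_one_add_sqrt_mul (ha : 0 ≤ a) :
    1 + a * b = 1 + sqrt a * (sqrt a * b) := by
  rw [← mul_assoc, sqrt_mul_sqrt_self a]

theorem isUnit_one_add_mul_of_nonneg (ha : 0 ≤ a) (hb : 0 ≤ b) : IsUnit (1 + a * b) := by
  rw [one_add_mul_eq_one_add_sqrt_mul ha]
  exact (isStrictlyPositive_one_add_sqrt_mul_mul_sqrt hb).isUnit.one_add_mul_swap

theorem ringInverse_one_add_mul_mul_nonneg (ha : 0 ≤ a) (hb : 0 ≤ b) :
    0 ≤ Ring.inverse (1 + a * b) * a := by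
  have hunit : IsUnit (1 + sqrt a * b * sqrt a) :=
    (isStrictlyPositive_one_add_sqrt_mul_mul_sqrt hb).isUnit
  have hconj : Ring.inverse (1 + a * b) * a
      = sqrt a * Ring.inverse (1 + sqrt a * b * sqrt a) * sqrt a := by
    calc Ring.inverse (1 + a * b) * a
        = Ring.inverse (1 + sqrt a * (sqrt a * b)) * sqrt a * sqrt a := by
          rw [← one_add_mul_eq_one_add_sqrt_mul ha, mul_assoc, sqrt_mul_sqrt_self a]
      _ = sqrt a * Ring.inverse (1 + sqrt a * b * sqrt a) * sqrt a := by
          rw [Ring.inverse_one_add_mul_mul hunit]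
  rw [hconj]
  exact conjugate_nonneg_of_nonneg
    (isStrictlyPositive_one_add_sqrt_mul_mul_sqrt hb).ringInverse.nonneg (sqrt_nonneg a)

end CStarAlgebra

open ContinuousLinearMap in
/-- For positive operators `P, S` on a complex Hilbert space and `t ≥ 0`, the
operator `I + tPS` is boundedly invertible and `(I + tPS)⁻¹P` is self-adjoint and positive
semi-definite, i.e. the flow of `Ṗ = −PSP` leaves the cone of positive operators invariant. -/
theorem stmt_12 {H : Type*} [NormedAddCommGroup H] [InnerProductSpace ℂ H] [CompleteSpace H]
    (P S : H →L[ℂ] H) (hP : P.IsPositive) (hS : S.IsPositive) (t : ℝ) (ht : 0 ≤ t) :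
    IsUnit (1 + t • (P * S)) ∧ (Ring.inverse (1 + t • (P * S)) * P).IsPositive := by
  have hP₀ : 0 ≤ P := (nonneg_iff_isPositive P).mpr hP
  have htS₀ : 0 ≤ t • S := smul_nonneg ht ((nonneg_iff_isPositive S).mpr hS)
  rw [← mul_smul_comm]
  exact ⟨isUnit_one_add_mul_of_nonneg hP₀ htS₀,
    (nonneg_iff_isPositive _).mp (ringInverse_one_add_mul_mul_nonneg hP₀ htS₀)⟩
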